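/- For every finite set 𝓘 ⊆ ℤ ∪ {−∞,+∞} of interval endpoints and every k ∈ ℕ, the set of MTL formulas of until rank at most k all of whose interval endpoints belong to 𝓘 contains only finitely many formulas up to logical equivalence (over a fixed finite set of propositional variables). -/

import Mathlib

/-- Integers extended with `-∞` (`⊥`) and `+∞` (`⊤`), used as interval endpoints. -/
abbrev EInt' := WithBot (WithTop ℤ)

def EInt'.ofInt (n : ℤ) : EInt' := ((n : WithTop ℤ) : EInt')

/-- An interval of integers, given by two (possibly infinite) endpoints and
openness flags. -/
structure Iv where
  lo : EInt'
  hi : EInt'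
  loOpen : Bool
  hiOpen : Bool

/-- Membership of an integer in an interval. -/
def Iv.mem (I : Iv) (d : ℤ) : Prop :=
  (if I.loOpen then I.lo < EInt'.ofInt d else I.lo ≤ EInt'.ofInt d) ∧
  (if I.hiOpen then EInt'.ofInt d < I.hi else EInt'.ofInt d ≤ I.hi)

/-- The interval `(-∞, +∞)`. -/
def Iv.univ : Iv := ⟨⊥, ⊤, true, true⟩

/-- The singleton interval `[n, n]`. -/
def Iv.pt (n : ℤ) : Iv := ⟨EInt'.ofInt n, EInt'.ofInt n, false, false⟩

/-- A data word: an infinite sequence of pairs of a set of propositions and a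
natural number data value. -/
abbrev DataWord (P : Type) := ℕ → (Set P) × ℕ

/-- Syntax of MTL: atoms, negation, conjunction, and interval-constrained
strict until. -/
inductive MTL (P : Type) where
  | atom : P → MTL P
  | neg  : MTL P → MTL P
  | and  : MTL P → MTL P → MTL P
  | untl : MTL P → Iv → MTL P → MTL P

/-- Satisfaction of an MTL formula at position `i` of data word `w`. -/
def MTL.sat {P : Type} (w : DataWord P) : ℕ → MTL P → Prop
  | i, .atom p => p ∈ (w i).1
  | i, .neg φ => ¬ MTL.sat w i φ
  | i, .and φ ψ => MTL.sat w i φ ∧ MTL.sat w i ψ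
  | i, .untl φ I ψ => ∃ j, i < j ∧ MTL.sat w j ψ ∧
      I.mem (((w j).2 : ℤ) - ((w i).2 : ℤ)) ∧
      ∀ k, i < k → k < j → MTL.sat w k φ

/-- A data word satisfies an MTL formula if it holds at position `0`. -/
def MTL.models {P : Type} (w : DataWord P) (φ : MTL P) : Prop := MTL.sat w 0 φ

/-- The until rank of an MTL formula. -/
def MTL.urk {P : Type} : MTL P → ℕ
  | .atom _ => 0
  | .neg φ => φ.urk
  | .and φ ψ => max φ.urk ψ.urk
  | .untl φ _ ψ => max φ.urk ψ.urk + 1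

/-- All interval endpoints of until operators in the formula lie in `S`. -/
def MTL.endpointsIn {P : Type} : MTL P → Set EInt' → Prop
  | .atom _, _ => True
  | .neg φ, S => φ.endpointsIn S
  | .and φ ψ, S => φ.endpointsIn S ∧ ψ.endpointsIn S
  | .untl φ I ψ, S => I.lo ∈ S ∧ I.hi ∈ S ∧ φ.endpointsIn S ∧ ψ.endpointsIn S

/-- Two MTL formulas are equivalent if they are satisfied at exactly the same
pairs of a data word and a position. -/
def MTL.equivF {P : Type} (φ ψ : MTL P) : Prop :=
  ∀ (w : DataWord P) (i : ℕ), MTL.sat w i φ ↔ MTL.sat w i ψ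

/-!
Identify a formula with the set of (data word, position) pairs satisfying it. Negation and
conjunction act on these sets as complement and intersection, and an until formula's set only
depends on the sets of its two arguments and on its interval. By induction on `k`, the sets of
formulas of `MTL^S_k` therefore lie in the Boolean algebra generated by the finitely many atom
sets and the until sets built from `MTL^S_{k-1}` and the finitely many intervals with endpoints
in `S`; a finitely generated Boolean algebra of sets is finite.
-/

theorem Set.Finite.booleanSubalgebraClosure {X : Type*} {G : Set (Set X)} (hG : G.Finite) :
    (BooleanSubalgebra.closure G : Set (Set X)).Finite := by
  have : Finite G := hG.to_subtype
  -- Every generated set is a preimage under `x ↦ (the generators containing x)`.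
  let trace : X → G → Prop := fun x g => x ∈ g.1
  let preimages : BooleanSubalgebra (Set X) :=
    (⊤ : BooleanSubalgebra (Set (G → Prop))).map
      (CompleteLatticeHom.setPreimage trace).toBoundedLatticeHom
  have hG_sub : G ⊆ preimages := fun g hg =>
    ⟨{v | v ⟨g, hg⟩}, BooleanSubalgebra.mem_top, rfl⟩
  refine (Set.finite_range (Set.preimage trace)).subset ?_
  rintro A hA
  obtain ⟨T, -, rfl⟩ := BooleanSubalgebra.closure_le.mpr hG_sub hA
  exact ⟨T, rfl⟩

theorem exists_list_forall_exists_eq_of_finite_image {α β : Type*} {f : α → β} {C : Set α}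
    (h : (f '' C).Finite) : ∃ L : List α, ∀ a ∈ C, ∃ b ∈ L, f a = f b := by
  obtain ⟨t, -, ht, hCt⟩ :=
    Set.exists_subset_image_finite_and.mp ⟨f '' C, subset_rfl, h, subset_rfl⟩
  refine ⟨ht.toFinset.toList, fun a ha => ?_⟩
  obtain ⟨b, hb, hfb⟩ := hCt (Set.mem_image_of_mem f ha)
  exact ⟨b, by simpa using hb, hfb.symm⟩

theorem Iv.finite_setOf_endpoints_mem {S : Set EInt'} (hS : S.Finite) :
    {I : Iv | I.lo ∈ S ∧ I.hi ∈ S}.Finite := by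
  refine ((hS.prod (hS.prod (Set.finite_univ (α := Bool × Bool)))).image
    fun t => (⟨t.1, t.2.1, t.2.2.1, t.2.2.2⟩ : Iv)).subset ?_
  rintro ⟨lo, hi, b₁, b₂⟩ ⟨hlo, hhi⟩
  exact ⟨(lo, hi, b₁, b₂), ⟨hlo, hhi, trivial⟩, rfl⟩

namespace MTL

variable {P : Type}

def denote (φ : MTL P) : Set (DataWord P × ℕ) := {x | φ.sat x.1 x.2}

theorem equivF_iff_denote_eq {φ ψ : MTL P} : φ.equivF ψ ↔ φ.denote = ψ.denote := by
  simp only [equivF, Set.ext_iff, Prod.forall, denote, Set.mem_ofPred_eq]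

def untlSet (A : Set (DataWord P × ℕ)) (I : Iv) (B : Set (DataWord P × ℕ)) :
    Set (DataWord P × ℕ) :=
  {x | ∃ j, x.2 < j ∧ (x.1, j) ∈ B ∧ I.mem (((x.1 j).2 : ℤ) - ((x.1 x.2).2 : ℤ)) ∧
    ∀ k, x.2 < k → k < j → (x.1, k) ∈ A}

theorem denote_neg (φ : MTL P) : (neg φ).denote = φ.denoteᶜ := rfl

theorem denote_and (φ ψ : MTL P) : (and φ ψ).denote = φ.denote ⊓ ψ.denote := rfl

theorem denote_untl (φ : MTL P) (I : Iv) (ψ : MTL P) :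
    (untl φ I ψ).denote = untlSet φ.denote I ψ.denote := rfl

def untlSets (S : Set EInt') (D : Set (Set (DataWord P × ℕ))) :
    Set (Set (DataWord P × ℕ)) :=
  (fun t => untlSet t.1 t.2.1 t.2.2) '' (D ×ˢ {I : Iv | I.lo ∈ S ∧ I.hi ∈ S} ×ˢ D)

theorem finite_untlSets {S : Set EInt'} (hS : S.Finite) {D : Set (Set (DataWord P × ℕ))}
    (hD : D.Finite) : (untlSets S D).Finite :=
  (hD.prod ((Iv.finite_setOf_endpoints_mem hS).prod hD)).image _

/-- `MTL^S_k`. -/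
def fragment (S : Set EInt') (k : ℕ) : Set (MTL P) := {φ | φ.urk ≤ k ∧ φ.endpointsIn S}

theorem denote_mem_closure_of_lower {S : Set EInt'} {k : ℕ} {D : Set (Set (DataWord P × ℕ))}
    (hD : ∀ ψ : MTL P, ψ.urk < k → ψ.endpointsIn S → ψ.denote ∈ D) :
    ∀ φ ∈ fragment S k, φ.denote ∈
      BooleanSubalgebra.closure (Set.range (denote ∘ atom) ∪ untlSets S D) := by
  intro φ
  induction φ with
  | atom p => exact fun _ => BooleanSubalgebra.subset_closure (Or.inl ⟨p, rfl⟩)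
  | neg φ ih => exact fun hφ => denote_neg φ ▸ BooleanSubalgebra.compl_mem (ih hφ)
  | and φ ψ ihφ ihψ =>
    rintro ⟨hk, hφS, hψS⟩
    rw [urk, max_le_iff] at hk
    rw [denote_and]
    exact BooleanSubalgebra.inf_mem (ihφ ⟨hk.1, hφS⟩) (ihψ ⟨hk.2, hψS⟩)
  | untl φ I ψ =>
    rintro ⟨hk, hlo, hhi, hφS, hψS⟩
    rw [urk, Nat.add_one_le_iff, max_lt_iff] at hk
    rw [denote_untl]
    refine BooleanSubalgebra.subset_closure (Or.inr ⟨(φ.denote, I, ψ.denote), ?_, rfl⟩)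
    exact ⟨hD φ hk.1 hφS, ⟨hlo, hhi⟩, hD ψ hk.2 hψS⟩

theorem finite_denote_image_fragment_of_lower [Finite P] {S : Set EInt'} (hS : S.Finite) {k : ℕ}
    {D : Set (Set (DataWord P × ℕ))} (hDfin : D.Finite)
    (hD : ∀ ψ : MTL P, ψ.urk < k → ψ.endpointsIn S → ψ.denote ∈ D) :
    (denote '' fragment (P := P) S k).Finite :=
  (((Set.finite_range _).union (finite_untlSets hS hDfin)).booleanSubalgebraClosure).subset
    (Set.image_subset_iff.mpr (denote_mem_closure_of_lower hD))

theorem finite_denote_image_fragment [Finite P] {S : Set EInt'} (hS : S.Finite) (k : ℕ) :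
    (denote '' fragment (P := P) S k).Finite := by
  induction k with
  | zero =>
    exact finite_denote_image_fragment_of_lower hS Set.finite_empty
      fun ψ h => absurd h (Nat.not_lt_zero _)
  | succ k ih =>
    exact finite_denote_image_fragment_of_lower hS ih
      fun ψ h hψS => ⟨ψ, ⟨Nat.lt_succ_iff.mp h, hψS⟩, rfl⟩

end MTL

/-- For a finite endpoint set `S` and rank bound `k`, there are only finitely
many formulas in `MTL^S_k` up to equivalence. -/
theorem mtl_rank_endpoints_finite {P : Type} [Fintype P]
    (S : Set EInt') (hS : S.Finite) (k : ℕ) :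
    ∃ L : List (MTL P), ∀ φ : MTL P, MTL.urk φ ≤ k → MTL.endpointsIn φ S →
      ∃ ψ ∈ L, MTL.equivF φ ψ := by
  obtain ⟨L, hL⟩ := exists_list_forall_exists_eq_of_finite_image
    (MTL.finite_denote_image_fragment (P := P) hS k)
  refine ⟨L, fun φ hk hφS => ?_⟩
  obtain ⟨ψ, hψ, hφψ⟩ := hL φ ⟨hk, hφS⟩
  exact ⟨ψ, hψ, MTL.equivF_iff_denote_eq.mpr hφψ⟩
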